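/- Let X be a finite set with |X| ≥ 3 and let N be a stack-free arboreal network on X (N ∈ A(X)) that is banyan. Then N is encoded by D(N) within A(X); that is, every network N' ∈ A(X) with R(N') ∪ D(N') = D(N) satisfies N' ≃ N. -/

import Mathlib

/-!
Common definitions for formalizing arboreal networks.

A (multi-rooted) network is modelled as a `PreNetwork`: a directed graph (arc
relation) on a vertex type `V` together with an embedding of the label set `X`
onto the leaves.  `IsNetwork` collects the m-network axioms.  Since the
underlying graph `U(N)` of an m-network is connected and the degree-1 vertices
of `U(N)` are exactly the leaves, the suppressed graph `U(N)⁻` is an unrooted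
phylogenetic tree on `X` if and only if `U(N)` is acyclic; we use this as the
definition of `IsArboreal`.
-/

namespace ArbNet

variable {X V W : Type}

/-- In-degree of a vertex of a digraph given by its arc relation. -/
noncomputable def inDeg (A : V → V → Prop) (v : V) : ℕ := {u | A u v}.ncard

/-- Out-degree of a vertex of a digraph given by its arc relation. -/
noncomputable def outDeg (A : V → V → Prop) (v : V) : ℕ := {u | A v u}.ncard

/-- A root: in-degree 0 and out-degree at least 2. -/
def IsRoot (A : V → V → Prop) (v : V) : Prop := inDeg A v = 0 ∧ 2 ≤ outDeg A v

/-- A leaf vertex: in-degree 1 and out-degree 0. -/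
def IsLeafVtx (A : V → V → Prop) (v : V) : Prop := inDeg A v = 1 ∧ outDeg A v = 0

/-- A hybrid vertex: out-degree 1 and in-degree at least 2. -/
def IsHybrid (A : V → V → Prop) (v : V) : Prop := outDeg A v = 1 ∧ 2 ≤ inDeg A v

/-- A tree vertex: in-degree 1 and out-degree at least 2. -/
def IsTreeVtx (A : V → V → Prop) (v : V) : Prop := inDeg A v = 1 ∧ 2 ≤ outDeg A v

/-- `Above A v u`: there is a directed path from `v` down to `u`
(`v` is above `u`, `u` is below `v`). -/
def Above (A : V → V → Prop) : V → V → Prop := Relation.ReflTransGen A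

/-- The underlying undirected (simple) graph `U(N)` of a digraph. -/
def underlying (A : V → V → Prop) : SimpleGraph V where
  Adj u v := u ≠ v ∧ (A u v ∨ A v u)
  symm := by
    refine ⟨?_⟩
    intro u v h
    exact ⟨h.1.symm, h.2.symm⟩
  loopless := by
    refine ⟨?_⟩
    intro v h
    exact h.1 rfl

/-- The data of a multi-rooted network on label set `X` with vertex type `V`:
an arc relation together with the labelling of the leaves by `X`. -/
structure PreNetwork (X : Type) (V : Type) where
  Arc : V → V → Prop
  leaf : X → V

/-- The m-network axioms: a finite DAG whose underlying graph is connected,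
whose leaves are (labelled by) exactly `X`, every in-degree-0 vertex is a root
of out-degree exactly 2, there is no vertex of in-degree 1 and out-degree 1,
and every interior vertex is a hybrid or a tree vertex. -/
def IsNetwork (N : PreNetwork X V) : Prop :=
  Finite V ∧
  (∀ v, ¬ Relation.TransGen N.Arc v v) ∧
  (underlying N.Arc).Connected ∧
  Function.Injective N.leaf ∧
  (∀ v, IsLeafVtx N.Arc v ↔ v ∈ Set.range N.leaf) ∧
  (∀ v, (inDeg N.Arc v = 0 ∧ outDeg N.Arc v = 2) ∨ IsLeafVtx N.Arc v ∨
      IsHybrid N.Arc v ∨ IsTreeVtx N.Arc v)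

/-- `N` is arboreal iff the suppressed underlying graph `U(N)⁻` is an unrooted
phylogenetic tree on `X`; for a connected `U(N)` whose degree-1 vertices are
exactly the leaves this holds iff `U(N)` is acyclic. -/
def IsArboreal (N : PreNetwork X V) : Prop := (underlying N.Arc).IsAcyclic

/-- Stack-free: no arc whose tail and head are both hybrids. -/
def StackFree (N : PreNetwork X V) : Prop :=
  ∀ u v, N.Arc u v → ¬(IsHybrid N.Arc u ∧ IsHybrid N.Arc v)

/-- Membership in the class `𝒜(X)` of stack-free arboreal networks on `X`. -/
def InA (N : PreNetwork X V) : Prop := IsNetwork N ∧ IsArboreal N ∧ StackFree N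

/-- Banyan: the parents of every hybrid are roots, and every leaf is the child
of a root or of a hybrid. -/
def Banyan (N : PreNetwork X V) : Prop :=
  (∀ h p, IsHybrid N.Arc h → N.Arc p h → IsRoot N.Arc p) ∧
  (∀ x : X, ∃ p, N.Arc p (N.leaf x) ∧ (IsRoot N.Arc p ∨ IsHybrid N.Arc p))

/-- The set `L(v)` of labels of leaves below a vertex `v`. -/
def leavesBelow (N : PreNetwork X V) (v : V) : Set X :=
  {x | Above N.Arc v (N.leaf x)}

/-- The triplet `xy|z` is induced by `N`: `x, y, z` are pairwise distinct and
there are a root `r` and a common ancestor `v ≤ r` of `x` and `y` with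
`z ∈ L(r)` and `z ∉ L(v)` (equivalently, `z` is not below the least common
ancestor of `x` and `y` in the tree below `r`). -/
def TripletRel (N : PreNetwork X V) (x y z : X) : Prop :=
  x ≠ y ∧ x ≠ z ∧ y ≠ z ∧
  ∃ r v, IsRoot N.Arc r ∧ Above N.Arc r v ∧
    Above N.Arc v (N.leaf x) ∧ Above N.Arc v (N.leaf y) ∧
    Above N.Arc r (N.leaf z) ∧ ¬ Above N.Arc v (N.leaf z)

/-- Degree of a vertex in the underlying undirected graph `U(N)`. -/
noncomputable def udeg (N : PreNetwork X V) (v : V) : ℕ :=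
  ((underlying N.Arc).neighborSet v).ncard

/-- The duet `x ∥ y` is induced by `N`: `x ≠ y`, no triplet induced by `N`
contains both `x` and `y` among its leaves, and the path in `U(N)` joining
`x` and `y` crosses precisely one degree-2 vertex of `U(N)`. -/
def DuetRel (N : PreNetwork X V) (x y : X) : Prop :=
  x ≠ y ∧
  (∀ z, ¬ TripletRel N x y z ∧ ¬ TripletRel N x z y ∧ ¬ TripletRel N y z x) ∧
  ∃ w : (underlying N.Arc).Walk (N.leaf x) (N.leaf y),
    w.IsPath ∧ (w.support.countP fun v => decide (udeg N v = 2)) = 1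

/-- The triplet system `ℛ(N)`, a triplet `xy|z` being recorded as the pair
`({x,y}, z)` with `{x,y}` an unordered pair. -/
def tripletSys (N : PreNetwork X V) : Set (Sym2 X × X) :=
  {t | ∃ x y z, TripletRel N x y z ∧ t = (s(x, y), z)}

/-- The duet system `𝒟(N)`. -/
def duetSys (N : PreNetwork X V) : Set (Sym2 X) :=
  {d | ∃ x y, DuetRel N x y ∧ d = s(x, y)}

/-- The union `𝒟(N) ∪ ℛ(N)`, with duets and triplets kept as different kinds
of objects (left resp. right summand). -/
def dtSys (N : PreNetwork X V) : Set (Sym2 X ⊕ (Sym2 X × X)) :=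
  (Sum.inl '' duetSys N) ∪ (Sum.inr '' tripletSys N)

/-- Isomorphism of networks on `X`: a bijection of the vertex sets preserving
arcs that is the identity on `X`. -/
def Isomorphic (N : PreNetwork X V) (N' : PreNetwork X W) : Prop :=
  ∃ e : V ≃ W, (∀ u v, N.Arc u v ↔ N'.Arc (e u) (e v)) ∧
    ∀ x, e (N.leaf x) = N'.leaf x

/-! ### Basic lemmas -/

section Basic

variable {M : PreNetwork X V}

lemma IsNetwork.finiteV (h : IsNetwork M) : Finite V := h.1
lemma IsNetwork.acyc (h : IsNetwork M) : ∀ v, ¬ Relation.TransGen M.Arc v v := h.2.1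
lemma IsNetwork.leafInj (h : IsNetwork M) : Function.Injective M.leaf := h.2.2.2.1
lemma IsNetwork.leafIff (h : IsNetwork M) :
    ∀ v, IsLeafVtx M.Arc v ↔ v ∈ Set.range M.leaf := h.2.2.2.2.1
lemma IsNetwork.classify (h : IsNetwork M) :
    ∀ v, (inDeg M.Arc v = 0 ∧ outDeg M.Arc v = 2) ∨ IsLeafVtx M.Arc v ∨
      IsHybrid M.Arc v ∨ IsTreeVtx M.Arc v := h.2.2.2.2.2

lemma IsNetwork.arc_ne (h : IsNetwork M) {u v : V} (ha : M.Arc u v) : u ≠ v := by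
  rintro rfl; exact h.acyc u (Relation.TransGen.single ha)

lemma IsNetwork.no2cycle (h : IsNetwork M) {u v : V} (ha : M.Arc u v) (hb : M.Arc v u) :
    False :=
  h.acyc u (Relation.TransGen.head ha (Relation.TransGen.single hb))

lemma adj_iff (h : IsNetwork M) {u v : V} :
    (underlying M.Arc).Adj u v ↔ (M.Arc u v ∨ M.Arc v u) := by
  constructor
  · exact fun hh => hh.2
  · rintro (hh | hh)
    · exact ⟨h.arc_ne hh, Or.inl hh⟩
    · exact ⟨(h.arc_ne hh).symm, Or.inr hh⟩

lemma inDeg_eq_zero_iff (h : IsNetwork M) {v : V} :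
    inDeg M.Arc v = 0 ↔ ∀ u, ¬ M.Arc u v := by
  have : Finite V := h.finiteV
  rw [inDeg, Set.ncard_eq_zero (Set.toFinite _)]
  simp [Set.eq_empty_iff_forall_notMem]

lemma outDeg_eq_zero_iff (h : IsNetwork M) {v : V} :
    outDeg M.Arc v = 0 ↔ ∀ u, ¬ M.Arc v u := by
  have : Finite V := h.finiteV
  rw [outDeg, Set.ncard_eq_zero (Set.toFinite _)]
  simp [Set.eq_empty_iff_forall_notMem]

lemma inDeg_pos_of_arc (h : IsNetwork M) {u v : V} (ha : M.Arc u v) :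
    inDeg M.Arc v ≠ 0 := fun hz => (inDeg_eq_zero_iff h).mp hz u ha

lemma outDeg_pos_of_arc (h : IsNetwork M) {u v : V} (ha : M.Arc u v) :
    outDeg M.Arc u ≠ 0 := fun hz => (outDeg_eq_zero_iff h).mp hz v ha

/-- a leaf vertex has no out-arcs -/
lemma IsLeafVtx.no_out (h : IsNetwork M) {v u : V} (hl : IsLeafVtx M.Arc v) :
    ¬ M.Arc v u := (outDeg_eq_zero_iff h).mp hl.2 u

/-- unique in-neighbour of an in-degree-one vertex -/
lemma parent_unique (h : IsNetwork M) {v u u' : V} (hd : inDeg M.Arc v = 1)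
    (ha : M.Arc u v) (ha' : M.Arc u' v) : u = u' := by
  obtain ⟨a, hs⟩ := Set.ncard_eq_one.mp hd
  have h1 : u ∈ {u | M.Arc u v} := ha
  have h2 : u' ∈ {u | M.Arc u v} := ha'
  rw [hs] at h1 h2
  simp at h1 h2; rw [h1, h2]

lemma exists_parent (h : IsNetwork M) {v : V} (hd : inDeg M.Arc v ≠ 0) :
    ∃ u, M.Arc u v := by
  by_contra hc; push_neg at hc
  exact hd ((inDeg_eq_zero_iff h).mpr hc)

lemma exists_child (h : IsNetwork M) {v : V} (hd : outDeg M.Arc v ≠ 0) :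
    ∃ u, M.Arc v u := by
  by_contra hc; push_neg at hc
  exact hd ((outDeg_eq_zero_iff h).mpr hc)

/-- the unique out-neighbour of an out-degree-one vertex -/
lemma child_unique (h : IsNetwork M) {v u u' : V} (hd : outDeg M.Arc v = 1)
    (ha : M.Arc v u) (ha' : M.Arc v u') : u = u' := by
  obtain ⟨a, hs⟩ := Set.ncard_eq_one.mp hd
  have h1 : u ∈ {u | M.Arc v u} := ha
  have h2 : u' ∈ {u | M.Arc v u} := ha'
  rw [hs] at h1 h2
  simp at h1 h2; rw [h1, h2]

/-- mutual exclusivity -/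
lemma root_not_leaf {v : V} (h1 : IsRoot M.Arc v) (h2 : IsLeafVtx M.Arc v) : False := by
  obtain ⟨a1, _⟩ := h1; obtain ⟨b1, _⟩ := h2; omega

lemma root_not_hybrid {v : V} (h1 : IsRoot M.Arc v) (h2 : IsHybrid M.Arc v) : False := by
  obtain ⟨a1, _⟩ := h1; obtain ⟨_, b2⟩ := h2; omega

lemma leaf_not_hybrid {v : V} (h1 : IsLeafVtx M.Arc v) (h2 : IsHybrid M.Arc v) : False := by
  obtain ⟨_, a2⟩ := h1; obtain ⟨b1, _⟩ := h2; omega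

lemma root_not_tree {v : V} (h1 : IsRoot M.Arc v) (h2 : IsTreeVtx M.Arc v) : False := by
  obtain ⟨a1, _⟩ := h1; obtain ⟨b1, _⟩ := h2; omega

lemma leaf_not_tree {v : V} (h1 : IsLeafVtx M.Arc v) (h2 : IsTreeVtx M.Arc v) : False := by
  obtain ⟨_, a2⟩ := h1; obtain ⟨_, b2⟩ := h2; omega

lemma hybrid_not_tree {v : V} (h1 : IsHybrid M.Arc v) (h2 : IsTreeVtx M.Arc v) : False := by
  obtain ⟨a1, _⟩ := h1; obtain ⟨_, b2⟩ := h2; omega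

lemma indeg_zero_root (h : IsNetwork M) {v : V} (hd : inDeg M.Arc v = 0) :
    IsRoot M.Arc v := by
  rcases h.classify v with hc | hc | hc | hc
  · exact ⟨hc.1, le_of_eq hc.2.symm⟩
  · rw [hc.1] at hd; exact absurd hd one_ne_zero
  · have := hc.2; rw [hd] at this; omega
  · rw [hc.1] at hd; exact absurd hd one_ne_zero

lemma IsNetwork.classify' (h : IsNetwork M) (v : V) :
    IsRoot M.Arc v ∨ IsLeafVtx M.Arc v ∨ IsHybrid M.Arc v ∨ IsTreeVtx M.Arc v := by
  rcases h.classify v with hc | hc | hc | hc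
  · exact Or.inl ⟨hc.1, le_of_eq hc.2.symm⟩
  · exact Or.inr (Or.inl hc)
  · exact Or.inr (Or.inr (Or.inl hc))
  · exact Or.inr (Or.inr (Or.inr hc))

lemma root_outdeg_two (h : IsNetwork M) {v : V} (hr : IsRoot M.Arc v) :
    outDeg M.Arc v = 2 := by
  rcases h.classify v with hc | hc | hc | hc
  · exact hc.2
  · exact absurd hc (fun h2 => root_not_leaf hr h2)
  · exact absurd hc (fun h2 => root_not_hybrid hr h2)
  · exact absurd hc (fun h2 => root_not_tree hr h2)

end Basic

/-! ### Degrees in the underlying graph -/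

section Udeg

variable {M : PreNetwork X V}

lemma neighborSet_eq (h : IsNetwork M) (v : V) :
    (underlying M.Arc).neighborSet v = {u | M.Arc u v} ∪ {u | M.Arc v u} := by
  ext u
  simp only [SimpleGraph.mem_neighborSet, Set.mem_union, Set.mem_setOf_eq]
  rw [adj_iff h]
  tauto

lemma udeg_eq (h : IsNetwork M) (v : V) :
    udeg M v = inDeg M.Arc v + outDeg M.Arc v := by
  have : Finite V := h.finiteV
  have hd : Disjoint {u | M.Arc u v} {u | M.Arc v u} := by
    rw [Set.disjoint_left]
    intro u h1 h2
    exact h.no2cycle h1 h2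
  rw [udeg, neighborSet_eq h, Set.ncard_union_eq hd (Set.toFinite _) (Set.toFinite _)]
  rfl

lemma udeg_root (h : IsNetwork M) {v : V} (hr : IsRoot M.Arc v) : udeg M v = 2 := by
  rw [udeg_eq h, hr.1, root_outdeg_two h hr]

lemma udeg_leaf (h : IsNetwork M) {v : V} (hl : IsLeafVtx M.Arc v) : udeg M v = 1 := by
  rw [udeg_eq h, hl.1, hl.2]

lemma udeg_hybrid (h : IsNetwork M) {v : V} (hh : IsHybrid M.Arc v) : 3 ≤ udeg M v := by
  rw [udeg_eq h, hh.1]; have := hh.2; omega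

end Udeg

/-! ### Descent in a finite DAG -/

section Descent

variable {M : PreNetwork X V}

lemma wf_down (h : IsNetwork M) :
    WellFounded (fun a b : V => Relation.TransGen M.Arc b a) := by
  have : Finite V := h.finiteV
  have ht : IsTrans V (fun a b : V => Relation.TransGen M.Arc b a) :=
    ⟨fun a b c hab hbc => Relation.TransGen.trans hbc hab⟩
  have hi : IsIrrefl V (fun a b : V => Relation.TransGen M.Arc b a) :=
    ⟨fun a => h.acyc a⟩
  exact Finite.wellFounded_of_trans_of_irrefl _

lemma wf_up (h : IsNetwork M) :
    WellFounded (fun a b : V => Relation.TransGen M.Arc a b) := by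
  have : Finite V := h.finiteV
  have ht : IsTrans V (fun a b : V => Relation.TransGen M.Arc a b) :=
    ⟨fun a b c hab hbc => Relation.TransGen.trans hab hbc⟩
  have hi : IsIrrefl V (fun a b : V => Relation.TransGen M.Arc a b) :=
    ⟨fun a => h.acyc a⟩
  exact Finite.wellFounded_of_trans_of_irrefl _

lemma exists_leaf_below (h : IsNetwork M) (v : V) :
    ∃ x : X, Above M.Arc v (M.leaf x) := by
  induction v using (wf_down h).recursion with
  | _ v ih =>
    by_cases hz : outDeg M.Arc v = 0
    · have hl : IsLeafVtx M.Arc v := by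
        rcases h.classify v with hc | hc | hc | hc
        · rw [hz] at hc; exact absurd hc.2.symm (by omega)
        · exact hc
        · have := hc.1; omega
        · have := hc.2; omega
      obtain ⟨x, hx⟩ := (h.leafIff v).mp hl
      exact ⟨x, hx ▸ Relation.ReflTransGen.refl⟩
    · obtain ⟨u, hu⟩ := exists_child h hz
      obtain ⟨x, hx⟩ := ih u (Relation.TransGen.single hu)
      exact ⟨x, Relation.ReflTransGen.head hu hx⟩

lemma exists_root_above (h : IsNetwork M) (v : V) :
    ∃ r, IsRoot M.Arc r ∧ Above M.Arc r v := by
  induction v using (wf_up h).recursion with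
  | _ v ih =>
    by_cases hz : inDeg M.Arc v = 0
    · exact ⟨v, indeg_zero_root h hz, Relation.ReflTransGen.refl⟩
    · obtain ⟨u, hu⟩ := exists_parent h hz
      obtain ⟨r, hr, hab⟩ := ih u (Relation.TransGen.single hu)
      exact ⟨r, hr, hab.tail hu⟩

/-- if `r` has in-degree 0 and is above `v`... then anything above a root is itself -/
lemma above_root_eq (h : IsNetwork M) {r v : V} (hr : inDeg M.Arc v = 0)
    (hab : Above M.Arc r v) : r = v := by
  rcases Relation.ReflTransGen.cases_tail hab with he | ⟨u, _, hu⟩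
  · exact he.symm
  · exact absurd hu ((inDeg_eq_zero_iff h).mp hr u)

end Descent

/-! ### Consequences of acyclicity of the underlying graph -/

section Acyclic

variable {M : PreNetwork X V}

/-- From a directed reachability we get an undirected walk all whose support is below the
start. -/
lemma walk_of_above (h : IsNetwork M) {a b : V} (hab : Above M.Arc a b) :
    ∃ w : (underlying M.Arc).Walk a b, ∀ v ∈ w.support, Above M.Arc a v := by
  induction hab with
  | refl =>
    refine ⟨SimpleGraph.Walk.nil, ?_⟩
    intro v hv
    simp only [SimpleGraph.Walk.support_nil, List.mem_singleton] at hv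
    subst hv
    exact Relation.ReflTransGen.refl
  | @tail b c hab hbc ih =>
    obtain ⟨w, hw⟩ := ih
    refine ⟨w.concat ((adj_iff h).mpr (Or.inl hbc)), ?_⟩
    intro v hv
    rw [SimpleGraph.Walk.support_concat, List.mem_append] at hv
    rcases hv with hv | hv
    · exact hw v hv
    · simp only [List.mem_singleton] at hv
      subst hv
      exact hab.tail hbc

/-- two distinct children of a vertex have disjoint sets of descendants -/
lemma branch_disjoint (hN : IsNetwork M) (hA : IsArboreal M) {t u1 u2 w : V}
    (h1 : M.Arc t u1) (h2 : M.Arc t u2) (hne : u1 ≠ u2)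
    (hb1 : Above M.Arc u1 w) (hb2 : Above M.Arc u2 w) : False := by
  classical
  have ht1 : ¬ Above M.Arc u1 t := fun hh => hN.acyc t (Relation.TransGen.head' h1 hh)
  have ht2 : ¬ Above M.Arc u2 t := fun hh => hN.acyc t (Relation.TransGen.head' h2 hh)
  obtain ⟨w1, hw1⟩ := walk_of_above hN hb1
  obtain ⟨w2, hw2⟩ := walk_of_above hN hb2
  set q : (underlying M.Arc).Walk u1 u2 := w1.append w2.reverse with hq
  have hqt : t ∉ q.support := by
    rw [hq]
    intro hmem
    rw [SimpleGraph.Walk.mem_support_append_iff] at hmem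
    rcases hmem with hmem | hmem
    · exact ht1 (hw1 t hmem)
    · rw [SimpleGraph.Walk.support_reverse] at hmem
      exact ht2 (hw2 t (List.mem_reverse.mp hmem))
  set p := q.toPath with hp
  have hpt : t ∉ (p : (underlying M.Arc).Walk u1 u2).support :=
    fun hmem => hqt (SimpleGraph.Walk.support_toPath_subset q hmem)
  have hadj1 : (underlying M.Arc).Adj t u1 := (adj_iff hN).mpr (Or.inl h1)
  have hadj2 : (underlying M.Arc).Adj u2 t := (adj_iff hN).mpr (Or.inr h2)
  set pc : (underlying M.Arc).Walk u1 t := (p : (underlying M.Arc).Walk u1 u2).concat hadj2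
    with hpc
  have hcyc : (SimpleGraph.Walk.cons hadj1 pc).IsCycle := by
    rw [SimpleGraph.Walk.cons_isCycle_iff]
    constructor
    · -- pc is a path
      rw [SimpleGraph.Walk.isPath_def, hpc, SimpleGraph.Walk.support_concat,
        List.nodup_append]
      refine ⟨(SimpleGraph.Walk.isPath_def _).mp p.2, List.nodup_singleton _, ?_⟩
      intro a ha b hb
      simp only [List.mem_singleton] at hb
      subst hb
      rintro rfl
      exact hpt ha
    · rw [hpc, SimpleGraph.Walk.edges_concat]
      intro hmem
      rw [List.concat_eq_append, List.mem_append] at hmem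
      rcases hmem with hmem | hmem
      · exact hpt (SimpleGraph.Walk.fst_mem_support_of_mem_edges _ hmem)
      · simp only [List.mem_singleton] at hmem
        rw [Sym2.eq_iff] at hmem
        rcases hmem with ⟨h3, h4⟩ | ⟨h3, h4⟩
        · exact hN.arc_ne h1 h4.symm
        · exact hne h4
  exact hA _ hcyc

/-- a "4-cycle" is impossible: two distinct vertices cannot have two common neighbours
that are distinct from them (where all four are suitably distinct) -/
lemma no_four_cycle (hN : IsNetwork M) (hA : IsArboreal M) {r r' a b : V}
    (hrr : r ≠ r') (hab : a ≠ b) (hra : r ≠ a) (hrb : r ≠ b) (hr'a : r' ≠ a)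
    (hr'b : r' ≠ b)
    (h1 : (underlying M.Arc).Adj r a) (h2 : (underlying M.Arc).Adj r b)
    (h3 : (underlying M.Arc).Adj r' a) (h4 : (underlying M.Arc).Adj r' b) : False := by
  classical
  set p : (underlying M.Arc).Walk a r :=
    SimpleGraph.Walk.cons h3.symm (SimpleGraph.Walk.cons h4
      (SimpleGraph.Walk.cons h2.symm SimpleGraph.Walk.nil)) with hp
  have hcyc : (SimpleGraph.Walk.cons h1 p).IsCycle := by
    rw [SimpleGraph.Walk.cons_isCycle_iff]
    constructor
    · rw [SimpleGraph.Walk.isPath_def, hp]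
      simp only [SimpleGraph.Walk.support_cons, SimpleGraph.Walk.support_nil]
      refine List.nodup_cons.mpr ⟨?_, ?_⟩
      · simp only [List.mem_cons, List.not_mem_nil]
        push_neg
        exact ⟨hr'a.symm, hab, fun hh => absurd hh.symm hra, trivial⟩
      · refine List.nodup_cons.mpr ⟨?_, ?_⟩
        · simp only [List.mem_cons, List.not_mem_nil]
          push_neg
          exact ⟨hr'b, hrr.symm, trivial⟩
        · refine List.nodup_cons.mpr ⟨?_, ?_⟩
          · simp only [List.mem_cons, List.not_mem_nil]
            push_neg
            exact ⟨hrb.symm, trivial⟩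
          · simp
    · rw [hp]
      simp only [SimpleGraph.Walk.edges_cons, SimpleGraph.Walk.edges_nil,
        List.mem_cons, List.not_mem_nil]
      push_neg
      refine ⟨?_, ?_, ?_, trivial⟩
      · intro hmem
        rw [Sym2.eq_iff] at hmem
        rcases hmem with ⟨e1, e2⟩ | ⟨e1, e2⟩
        · exact hra e1
        · exact hrr e1
      · intro hmem
        rw [Sym2.eq_iff] at hmem
        rcases hmem with ⟨e1, e2⟩ | ⟨e1, e2⟩
        · exact hrr e1
        · exact hrb e1
      · intro hmem
        rw [Sym2.eq_iff] at hmem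
        rcases hmem with ⟨e1, e2⟩ | ⟨e1, e2⟩
        · exact hrb e1
        · exact hab e2
  exact hA _ hcyc
end Acyclic

/-! ### Banyan structure -/

section Banyan

variable {M : PreNetwork X V}

lemma leaf_is_leafvtx (hN : IsNetwork M) (x : X) : IsLeafVtx M.Arc (M.leaf x) :=
  (hN.leafIff _).mpr ⟨x, rfl⟩

lemma Banyan.noTree (hN : IsNetwork M) (hB : Banyan M) (v : V) :
    ¬ IsTreeVtx M.Arc v := by
  intro hv
  -- take a minimal tree vertex
  obtain ⟨m, hm, hmin⟩ := (wf_down hN).has_min {v | IsTreeVtx M.Arc v} ⟨v, hv⟩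
  have hdm : outDeg M.Arc m ≠ 0 := by have := hm.2; omega
  obtain ⟨c, hc⟩ := exists_child hN hdm
  rcases hN.classify' c with hcc | hcc | hcc | hcc
  · exact inDeg_pos_of_arc hN hc hcc.1
  · obtain ⟨x, hx⟩ := (hN.leafIff c).mp hcc
    subst hx
    obtain ⟨p, hp, hpr⟩ := hB.2 x
    have : p = m := parent_unique hN hcc.1 hp hc
    subst this
    rcases hpr with hpr | hpr
    · exact root_not_tree hpr hm
    · exact hybrid_not_tree hpr hm
  · exact root_not_tree (hB.1 c m hcc hc) hm
  · exact hmin c hcc (Relation.TransGen.single hc)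

lemma above_leaf_eq (hN : IsNetwork M) {v w : V} (hl : IsLeafVtx M.Arc v)
    (hab : Above M.Arc v w) : w = v := by
  rcases Relation.ReflTransGen.cases_head hab with he | ⟨c, hc, _⟩
  · exact he.symm
  · exact absurd hc (hl.no_out hN)

lemma tripletFree_of_banyan (hN : IsNetwork M) (hS : StackFree M) (hB : Banyan M) :
    ∀ x y z, ¬ TripletRel M x y z := by
  rintro x y z ⟨hxy, _, _, r, v, hr, hrv, hvx, hvy, hrz, hvz⟩
  have hlxy : M.leaf x ≠ M.leaf y := fun hh => hxy (hN.leafInj hh)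
  rcases hN.classify' v with hv | hv | hv | hv
  · -- v is a root, so r = v
    have : r = v := above_root_eq hN hv.1 hrv
    subst this
    exact hvz hrz
  · -- v is a leaf
    have h1 := above_leaf_eq hN hv hvx
    have h2 := above_leaf_eq hN hv hvy
    exact hlxy (h1.trans h2.symm)
  · -- v is a hybrid
    have key : ∀ w, Above M.Arc v w → IsLeafVtx M.Arc w → ∀ w', Above M.Arc v w' →
        IsLeafVtx M.Arc w' → w = w' := by
      intro w hw hlw w' hw' hlw'
      have step : ∀ u, Above M.Arc v u → IsLeafVtx M.Arc u →
          ∃ c, M.Arc v c ∧ u = c := by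
        intro u hu hlu
        rcases Relation.ReflTransGen.cases_head hu with he | ⟨c, hc, hcu⟩
        · exact absurd (he ▸ hv) (fun hh => leaf_not_hybrid hlu hh)
        · refine ⟨c, hc, ?_⟩
          rcases hN.classify' c with hcc | hcc | hcc | hcc
          · exact absurd hcc.1 (inDeg_pos_of_arc hN hc)
          · exact above_leaf_eq hN hcc hcu
          · exact absurd ⟨hv, hcc⟩ (hS v c hc)
          · exact absurd hcc (hB.noTree hN c)
      obtain ⟨c, hc, he⟩ := step w hw hlw
      obtain ⟨c', hc', he'⟩ := step w' hw' hlw'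
      have : c = c' := child_unique hN hv.1 hc hc'
      rw [he, he', this]
    exact hlxy (key _ hvx (leaf_is_leafvtx hN x) _ hvy (leaf_is_leafvtx hN y))
  · exact hB.noTree hN v hv

/-- choose a second child distinct from a given one, at an out-degree ≥ 2 vertex -/
lemma exists_other_child (hN : IsNetwork M) {v c : V} (hd : 2 ≤ outDeg M.Arc v)
    (hc : M.Arc v c) : ∃ c', M.Arc v c' ∧ c' ≠ c := by
  have : Finite V := hN.finiteV
  have h1 : 1 < ({u | M.Arc v u} : Set V).ncard := hd
  obtain ⟨a, ha, b, hb, hab⟩ := (Set.one_lt_ncard (Set.toFinite _)).mp h1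
  by_cases hac : a = c
  · exact ⟨b, hb, fun hh => hab (hac ▸ hh ▸ rfl)⟩
  · exact ⟨a, ha, hac⟩

lemma two_children (hN : IsNetwork M) {v : V} (hd : 2 ≤ outDeg M.Arc v) :
    ∃ c1 c2, c1 ≠ c2 ∧ M.Arc v c1 ∧ M.Arc v c2 := by
  have : Finite V := hN.finiteV
  obtain ⟨a, ha, b, hb, hab⟩ := (Set.one_lt_ncard (Set.toFinite _)).mp hd
  exact ⟨a, b, hab, ha, hb⟩

lemma triplet_of_tree (hN : IsNetwork M) (hA : IsArboreal M) {t : V}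
    (ht : IsTreeVtx M.Arc t) : ∃ x y z, TripletRel M x y z := by
  obtain ⟨u1, u2, hu12, hu1, hu2⟩ := two_children hN ht.2
  obtain ⟨x, hx⟩ := exists_leaf_below hN u1
  obtain ⟨y, hy⟩ := exists_leaf_below hN u2
  have hxy : x ≠ y := by
    rintro rfl
    exact branch_disjoint hN hA hu1 hu2 hu12 hx hy
  obtain ⟨r, hr, hrt⟩ := exists_root_above hN t
  have hrne : r ≠ t := by
    rintro rfl
    have := ht.1
    rw [hr.1] at this
    exact one_ne_zero this.symm
  obtain ⟨c, hc, hct⟩ : ∃ c, M.Arc r c ∧ Above M.Arc c t := by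
    rcases Relation.ReflTransGen.cases_head hrt with he | ⟨c, hc, hct⟩
    · exact absurd he hrne
    · exact ⟨c, hc, hct⟩
  obtain ⟨c', hc', hcc⟩ := exists_other_child hN hr.2 hc
  obtain ⟨z, hz⟩ := exists_leaf_below hN c'
  have hbelow_t_c : ∀ w, Above M.Arc t w → Above M.Arc c w := fun w hw => hct.trans hw
  have hznt : ¬ Above M.Arc t (M.leaf z) := by
    intro hh
    exact branch_disjoint hN hA hc' hc hcc hz (hbelow_t_c _ hh)
  have hxz : x ≠ z := by
    rintro rfl
    exact hznt (Relation.ReflTransGen.head hu1 hx)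
  have hyz : y ≠ z := by
    rintro rfl
    exact hznt (Relation.ReflTransGen.head hu2 hy)
  refine ⟨x, y, z, hxy, hxz, hyz, r, t, hr, hrt, ?_, ?_, ?_, hznt⟩
  · exact Relation.ReflTransGen.head hu1 hx
  · exact Relation.ReflTransGen.head hu2 hy
  · exact Relation.ReflTransGen.head hc' hz

lemma banyan_of_noTree (hN : IsNetwork M) (hS : StackFree M)
    (hnt : ∀ v, ¬ IsTreeVtx M.Arc v) : Banyan M := by
  constructor
  · intro h p hh hp
    rcases hN.classify' p with hc | hc | hc | hc
    · exact hc
    · exact absurd hp (hc.no_out hN)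
    · exact absurd ⟨hc, hh⟩ (hS p h hp)
    · exact absurd hc (hnt p)
  · intro x
    have hl : IsLeafVtx M.Arc (M.leaf x) := leaf_is_leafvtx hN x
    obtain ⟨p, hp⟩ := exists_parent hN (by rw [hl.1]; exact one_ne_zero)
    refine ⟨p, hp, ?_⟩
    rcases hN.classify' p with hc | hc | hc | hc
    · exact Or.inl hc
    · exact absurd hp (hc.no_out hN)
    · exact Or.inr hc
    · exact absurd hc (hnt p)

end Banyan

/-! ### The attachment point `pos x` of a label -/

section Pos

open Classical

variable (M : PreNetwork X V)

/-- the parent of the leaf labelled `x` (junk value if none exists) -/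
noncomputable def parent (x : X) : V :=
  if h : ∃ u, M.Arc u (M.leaf x) then h.choose else M.leaf x

/-- the label of the leaf child of a hybrid (junk if none) -/
noncomputable def lab [Nonempty X] (h : V) : X :=
  if hh : ∃ x, M.Arc h (M.leaf x) then hh.choose else Classical.arbitrary X

/-- the attachment point of a label: the parent if it is a hybrid, else the leaf
itself -/
noncomputable def pos (x : X) : V :=
  if _h : IsHybrid M.Arc (parent M x) then parent M x else M.leaf x

variable {M}

lemma parent_arc (hN : IsNetwork M) (x : X) : M.Arc (parent M x) (M.leaf x) := by
  have hl : IsLeafVtx M.Arc (M.leaf x) := leaf_is_leafvtx hN x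
  have hex : ∃ u, M.Arc u (M.leaf x) :=
    exists_parent hN (by rw [hl.1]; exact one_ne_zero)
  rw [parent, dif_pos hex]
  exact hex.choose_spec

lemma eq_parent (hN : IsNetwork M) {u : V} {x : X} (h : M.Arc u (M.leaf x)) :
    u = parent M x :=
  parent_unique hN (leaf_is_leafvtx hN x).1 h (parent_arc hN x)

lemma hybrid_child_leaf (hN : IsNetwork M) (hS : StackFree M) (hB : Banyan M)
    {h : V} (hh : IsHybrid M.Arc h) : ∃ x, M.Arc h (M.leaf x) := by
  obtain ⟨c, hc⟩ := exists_child hN (by rw [hh.1]; exact one_ne_zero)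
  rcases hN.classify' c with hcc | hcc | hcc | hcc
  · exact absurd hcc.1 (inDeg_pos_of_arc hN hc)
  · obtain ⟨x, hx⟩ := (hN.leafIff c).mp hcc
    exact ⟨x, hx ▸ hc⟩
  · exact absurd ⟨hh, hcc⟩ (hS h c hc)
  · exact absurd hcc (hB.noTree hN c)

lemma lab_arc [Nonempty X] (hN : IsNetwork M) (hS : StackFree M) (hB : Banyan M)
    {h : V} (hh : IsHybrid M.Arc h) : M.Arc h (M.leaf (lab M h)) := by
  have hex := hybrid_child_leaf hN hS hB hh
  rw [lab, dif_pos hex]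
  exact hex.choose_spec

lemma lab_eq [Nonempty X] (hN : IsNetwork M) (hS : StackFree M) (hB : Banyan M)
    {h : V} {x : X} (hh : IsHybrid M.Arc h) (harc : M.Arc h (M.leaf x)) :
    lab M h = x := by
  have := child_unique hN hh.1 (lab_arc hN hS hB hh) harc
  exact hN.leafInj this

lemma parent_root_or_hybrid (hN : IsNetwork M) (hB : Banyan M) (x : X) :
    IsRoot M.Arc (parent M x) ∨ IsHybrid M.Arc (parent M x) := by
  obtain ⟨p, hp, hpr⟩ := hB.2 x
  rwa [eq_parent hN hp] at hpr

lemma pos_cases (hN : IsNetwork M) (hB : Banyan M) (x : X) :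
    (pos M x = M.leaf x ∧ IsRoot M.Arc (parent M x)) ∨
      (pos M x = parent M x ∧ IsHybrid M.Arc (pos M x)) := by
  by_cases hh : IsHybrid M.Arc (parent M x)
  · right
    rw [pos, dif_pos hh]
    exact ⟨rfl, hh⟩
  · left
    rw [pos, dif_neg hh]
    rcases parent_root_or_hybrid hN hB x with hc | hc
    · exact ⟨rfl, hc⟩
    · exact absurd hc hh

lemma pos_hybrid_arc (hN : IsNetwork M) (hB : Banyan M) {x : X}
    (hh : IsHybrid M.Arc (pos M x)) : M.Arc (pos M x) (M.leaf x) := by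
  rcases pos_cases hN hB x with ⟨he, _⟩ | ⟨he, _⟩
  · rw [he] at hh
    exact absurd hh (fun h2 => leaf_not_hybrid (leaf_is_leafvtx hN x) h2)
  · rw [he]
    exact parent_arc hN x

lemma pos_not_root (hN : IsNetwork M) (hB : Banyan M) (x : X) :
    ¬ IsRoot M.Arc (pos M x) := by
  rcases pos_cases hN hB x with ⟨he, _⟩ | ⟨_, hh⟩
  · rw [he]
    exact fun hr => root_not_leaf hr (leaf_is_leafvtx hN x)
  · exact fun hr => root_not_hybrid hr hh

lemma pos_leaf_or_hybrid (hN : IsNetwork M) (hB : Banyan M) (x : X) :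
    (pos M x = M.leaf x ∧ IsRoot M.Arc (parent M x)) ∨ IsHybrid M.Arc (pos M x) := by
  rcases pos_cases hN hB x with h | h
  · exact Or.inl h
  · exact Or.inr h.2

lemma pos_inj (hN : IsNetwork M) (hB : Banyan M) {x y : X}
    (he : pos M x = pos M y) : x = y := by
  rcases pos_cases hN hB x with ⟨he1, hr1⟩ | ⟨_, hh1⟩
  · rcases pos_cases hN hB y with ⟨he2, _⟩ | ⟨_, hh2⟩
    · exact hN.leafInj (he1 ▸ he2 ▸ he)
    · rw [← he, he1] at hh2
      exact absurd hh2 (fun h2 => leaf_not_hybrid (leaf_is_leafvtx hN x) h2)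
  · rcases pos_cases hN hB y with ⟨he2, _⟩ | ⟨_, hh2⟩
    · rw [he, he2] at hh1
      exact absurd hh1 (fun h2 => leaf_not_hybrid (leaf_is_leafvtx hN y) h2)
    · have h1 := pos_hybrid_arc hN hB hh1
      have h2 := pos_hybrid_arc hN hB hh2
      rw [he] at h1
      exact hN.leafInj (child_unique hN hh2.1 h1 h2)

lemma pos_of_hybrid [Nonempty X] (hN : IsNetwork M) (hS : StackFree M) (hB : Banyan M)
    {h : V} (hh : IsHybrid M.Arc h) : pos M (lab M h) = h := by
  have harc := lab_arc hN hS hB hh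
  have hp : h = parent M (lab M h) := eq_parent hN harc
  rw [pos, ← hp, dif_pos hh]

lemma lab_pos [Nonempty X] (hN : IsNetwork M) (hS : StackFree M) (hB : Banyan M)
    {x : X} (hh : IsHybrid M.Arc (pos M x)) : lab M (pos M x) = x :=
  lab_eq hN hS hB hh (pos_hybrid_arc hN hB hh)

lemma child_of_root_pos [Nonempty X] (hN : IsNetwork M) (hS : StackFree M)
    (hB : Banyan M) {r c : V} (_hr : IsRoot M.Arc r) (harc : M.Arc r c) :
    ∃ x, pos M x = c := by
  rcases hN.classify' c with hcc | hcc | hcc | hcc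
  · exact absurd hcc.1 (inDeg_pos_of_arc hN harc)
  · obtain ⟨x, hx⟩ := (hN.leafIff c).mp hcc
    subst hx
    refine ⟨x, ?_⟩
    have hp : r = parent M x := eq_parent hN harc
    rcases pos_cases hN hB x with ⟨he, _⟩ | ⟨he, hh⟩
    · exact he
    · rw [he, ← hp] at hh
      exact absurd hh (fun h2 => root_not_hybrid _hr h2)
  · exact ⟨lab M c, pos_of_hybrid hN hS hB hcc⟩
  · exact absurd hcc (hB.noTree hN c)

end Pos

/-! ### Characterisation of duets in banyan networks -/

section Duet

variable {M : PreNetwork X V}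

lemma nbr_of_leaf (hN : IsNetwork M) {x : X} {u : V}
    (hadj : (underlying M.Arc).Adj (M.leaf x) u) : u = parent M x := by
  rcases (adj_iff hN).mp hadj with h | h
  · exact absurd h ((leaf_is_leafvtx hN x).no_out hN)
  · exact eq_parent hN h

lemma nbr_of_root (hN : IsNetwork M) {r u : V} (hr : IsRoot M.Arc r)
    (hadj : (underlying M.Arc).Adj r u) : M.Arc r u := by
  rcases (adj_iff hN).mp hadj with h | h
  · exact h
  · exact absurd hr.1 (inDeg_pos_of_arc hN h)

lemma nbr_of_hybrid [Nonempty X] (hN : IsNetwork M) (hS : StackFree M) (hB : Banyan M)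
    {h u : V} (hh : IsHybrid M.Arc h) (hadj : (underlying M.Arc).Adj h u) :
    M.Arc u h ∨ u = M.leaf (lab M h) := by
  rcases (adj_iff hN).mp hadj with ha | ha
  · exact Or.inr (child_unique hN hh.1 ha (lab_arc hN hS hB hh))
  · exact Or.inl ha

lemma children_eq_of_two (hN : IsNetwork M) {r c1 c2 c : V}
    (hd : outDeg M.Arc r = 2) (h1 : M.Arc r c1) (h2 : M.Arc r c2) (h12 : c1 ≠ c2)
    (hc : M.Arc r c) : c = c1 ∨ c = c2 := by
  obtain ⟨a, b, hab, hs⟩ := Set.ncard_eq_two.mp hd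
  have m1 : c1 ∈ ({a, b} : Set V) := hs ▸ h1
  have m2 : c2 ∈ ({a, b} : Set V) := hs ▸ h2
  have m : c ∈ ({a, b} : Set V) := hs ▸ hc
  simp only [Set.mem_insert_iff, Set.mem_singleton_iff] at m1 m2 m
  rcases m1 with m1 | m1 <;> rcases m2 with m2 | m2 <;> rcases m with m | m <;>
    subst_vars <;> tauto

/-- walking down from a child of a root and never meeting a degree-2 vertex again, one
must end at the attachment point of the final leaf -/
lemma walk_end_analysis [Nonempty X] (hN : IsNetwork M) (hS : StackFree M)
    (hB : Banyan M) {r c : V} {y : X} (hr : IsRoot M.Arc r) (hc : M.Arc r c)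
    (w : (underlying M.Arc).Walk c (M.leaf y)) (hw : w.IsPath) (hrw : r ∉ w.support)
    (hcount : (w.support.countP fun v => decide (udeg M v = 2)) = 0) :
    pos M y = c := by
  have hcount' : ∀ a ∈ w.support, udeg M a ≠ 2 := by
    intro a ha
    have := List.countP_eq_zero.mp hcount a ha
    simpa using this
  rcases hN.classify' c with hcc | hcc | hcc | hcc
  · exact absurd hcc.1 (inDeg_pos_of_arc hN hc)
  · -- c is a leaf
    cases w with
    | nil =>
      -- c = leaf y
      have hpy : r = parent M y := eq_parent hN hc
      rcases pos_cases hN hB y with ⟨he, _⟩ | ⟨he, hh⟩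
      · exact he
      · rw [he, ← hpy] at hh
        exact absurd hh (fun h2 => root_not_hybrid hr h2)
    | @cons _ u _ hadj p =>
      -- next vertex must be the parent of the leaf c, i.e. r
      obtain ⟨x, hx⟩ := (hN.leafIff c).mp hcc
      exfalso
      rw [← hx] at hadj
      have hu : u = parent M x := nbr_of_leaf hN hadj
      have hpr : r = parent M x := eq_parent hN (hx ▸ hc)
      rw [← hpr] at hu
      apply hrw
      rw [SimpleGraph.Walk.support_cons, ← hu]
      exact List.mem_cons_of_mem _ (SimpleGraph.Walk.start_mem_support p)
  · -- c is a hybrid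
    cases w with
    | nil => exact absurd hcc (fun h2 => leaf_not_hybrid (leaf_is_leafvtx hN y) h2)
    | @cons _ u _ hadj p =>
      rcases nbr_of_hybrid hN hS hB hcc hadj with ha | ha
      · -- u is a (root) parent of c: its degree is 2, contradiction
        exfalso
        have hur : IsRoot M.Arc u := hB.1 c u hcc ha
        refine hcount' u ?_ (udeg_root hN hur)
        rw [SimpleGraph.Walk.support_cons]
        exact List.mem_cons_of_mem _ (SimpleGraph.Walk.start_mem_support p)
      · -- u is the leaf child of c
        cases p with
        | nil =>
          -- here u = leaf y, so ha : leaf y = leaf (lab c)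
          rw [hN.leafInj ha]
          exact pos_of_hybrid hN hS hB hcc
        | @cons _ u2 _ hadj2 q =>
          exfalso
          rw [ha] at hadj2
          have h1 : u2 = parent M (lab M c) := nbr_of_leaf hN hadj2
          have h2 : c = parent M (lab M c) := eq_parent hN (lab_arc hN hS hB hcc)
          rw [← h2] at h1
          -- c occurs twice in the support
          have hnd := hw.2
          simp only [SimpleGraph.Walk.support_cons, List.nodup_cons] at hnd
          apply hnd.1
          exact List.mem_cons_of_mem _ (h1 ▸ SimpleGraph.Walk.start_mem_support q)
  · exact absurd hcc (hB.noTree hN c)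

/-- forward direction: a duet gives a root adjacent to both attachment points -/
lemma root_of_duet [Nonempty X] (hN : IsNetwork M) (hS : StackFree M) (hB : Banyan M)
    {x y : X} (hd : DuetRel M x y) :
    ∃ r, IsRoot M.Arc r ∧ M.Arc r (pos M x) ∧ M.Arc r (pos M y) := by
  obtain ⟨hxy, -, w, hw, hcount⟩ := hd
  have hlxy : M.leaf x ≠ M.leaf y := fun hh => hxy (hN.leafInj hh)
  generalize hs : M.leaf x = sx at w hlxy hcount hw
  cases w with
  | nil => exact absurd rfl hlxy
  | @cons _ u _ hadj p =>
    rw [← hs] at hadj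
    have hu : u = parent M x := nbr_of_leaf hN hadj
    rcases parent_root_or_hybrid hN hB x with hpr | hpr
    · -- parent of x is a root; pos x = leaf x
      have hpos : pos M x = M.leaf x := by
        rcases pos_cases hN hB x with ⟨he, _⟩ | ⟨he, hh⟩
        · exact he
        · rw [he] at hh
          exact absurd hh (fun h2 => root_not_hybrid hpr h2)
      cases p with
      | nil =>
        rw [← hu] at hpr
        exact absurd hpr (fun h2 => root_not_leaf h2 (leaf_is_leafvtx hN y))
      | @cons _ u2 _ hadj2 q =>
        rw [hu] at hadj2
        have harc2 : M.Arc (parent M x) u2 := nbr_of_root hN hpr hadj2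
        -- count bookkeeping
        have hcnt : (q.support.countP fun v => decide (udeg M v = 2)) = 0 := by
          rw [SimpleGraph.Walk.support_cons, SimpleGraph.Walk.support_cons,
            List.countP_cons, List.countP_cons] at hcount
          have e1 : udeg M sx = 1 := by
            rw [← hs]; exact udeg_leaf hN (leaf_is_leafvtx hN x)
          have e2 : udeg M u = 2 := by rw [hu]; exact udeg_root hN hpr
          rw [e1, e2] at hcount
          simp at hcount
          exact List.countP_eq_zero.mpr (by intro a ha; simpa using hcount a ha)
        have hnodup := hw.2
        simp only [SimpleGraph.Walk.support_cons, List.nodup_cons] at hnodup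
        have hrq : u ∉ q.support := by
          intro hmem
          exact hnodup.2.1 hmem
        rw [hu] at hrq
        have hqpath : q.IsPath := by
          have hh2 := hw
          rw [SimpleGraph.Walk.isPath_def] at hh2 ⊢
          simp only [SimpleGraph.Walk.support_cons, List.nodup_cons] at hh2
          exact hh2.2.2
        have hend := walk_end_analysis hN hS hB hpr harc2 q hqpath hrq hcnt
        refine ⟨parent M x, hpr, ?_, hend ▸ harc2⟩
        rw [hpos]
        exact parent_arc hN x
    · -- parent of x is a hybrid; pos x = parent x
      have hpos : pos M x = parent M x := by
        rw [pos, dif_pos hpr]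
      have hlabx : lab M (parent M x) = x := lab_eq hN hS hB hpr (parent_arc hN x)
      cases p with
      | nil =>
        rw [← hu] at hpr
        exact absurd hpr (fun h2 => leaf_not_hybrid (leaf_is_leafvtx hN y) h2)
      | @cons _ u2 _ hadj2 q =>
        rw [hu] at hadj2
        rcases nbr_of_hybrid hN hS hB hpr hadj2 with ha | ha
        · -- u2 is a root parent of the hybrid
          have hu2r : IsRoot M.Arc u2 := hB.1 _ u2 hpr ha
          cases q with
          | nil =>
            exact absurd hu2r (fun h2 => root_not_leaf h2 (leaf_is_leafvtx hN y))
          | @cons _ u3 _ hadj3 q2 =>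
            have harc3 : M.Arc u2 u3 := nbr_of_root hN hu2r hadj3
            have hcnt : (q2.support.countP fun v => decide (udeg M v = 2)) = 0 := by
              rw [SimpleGraph.Walk.support_cons, SimpleGraph.Walk.support_cons,
                SimpleGraph.Walk.support_cons, List.countP_cons, List.countP_cons,
                List.countP_cons] at hcount
              have e1 : udeg M sx = 1 := by
                rw [← hs]; exact udeg_leaf hN (leaf_is_leafvtx hN x)
              have e2 : udeg M u2 = 2 := udeg_root hN hu2r
              have e3 : udeg M u ≠ 2 := by
                rw [hu]
                have := udeg_hybrid hN hpr
                omega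
              rw [e1, e2] at hcount
              simp only [decide_eq_true_eq] at hcount
              rw [if_neg e3] at hcount
              simp at hcount
              exact List.countP_eq_zero.mpr (by intro a ha; simpa using hcount a ha)
            have hnodup := hw.2
            simp only [SimpleGraph.Walk.support_cons, List.nodup_cons] at hnodup
            have hrq : u2 ∉ q2.support := fun hmem => hnodup.2.2.1 hmem
            have hq2path : q2.IsPath := by
              have hh2 := hw
              rw [SimpleGraph.Walk.isPath_def] at hh2 ⊢
              simp only [SimpleGraph.Walk.support_cons, List.nodup_cons] at hh2
              exact hh2.2.2.2
            have hend := walk_end_analysis hN hS hB hu2r harc3 q2 hq2path hrq hcnt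
            refine ⟨u2, hu2r, ?_, hend ▸ harc3⟩
            rw [hpos]
            exact ha
        · -- u2 is the leaf child of the hybrid parent, i.e. leaf x again
          exfalso
          rw [hlabx, hs] at ha
          have hnd := hw.2
          simp only [SimpleGraph.Walk.support_cons, List.nodup_cons] at hnd
          apply hnd.1
          exact List.mem_cons_of_mem _ (ha ▸ SimpleGraph.Walk.start_mem_support q)
    
lemma root_unique_for_pair (hN : IsNetwork M) (hA : IsArboreal M) (hB : Banyan M)
    {x y : X} {r r' : V} (hxy : x ≠ y) (hr : IsRoot M.Arc r) (hr' : IsRoot M.Arc r')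
    (h1 : M.Arc r (pos M x)) (h2 : M.Arc r (pos M y))
    (h3 : M.Arc r' (pos M x)) (h4 : M.Arc r' (pos M y)) : r = r' := by
  by_contra hne
  have hpxy : pos M x ≠ pos M y := fun hh => hxy (pos_inj hN hB hh)
  have hra : r ≠ pos M x := fun hh => pos_not_root hN hB x (hh ▸ hr)
  have hrb : r ≠ pos M y := fun hh => pos_not_root hN hB y (hh ▸ hr)
  have hr'a : r' ≠ pos M x := fun hh => pos_not_root hN hB x (hh ▸ hr')
  have hr'b : r' ≠ pos M y := fun hh => pos_not_root hN hB y (hh ▸ hr')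
  exact no_four_cycle hN hA hne hpxy hra hrb hr'a hr'b
    ((adj_iff hN).mpr (Or.inl h1)) ((adj_iff hN).mpr (Or.inl h2))
    ((adj_iff hN).mpr (Or.inl h3)) ((adj_iff hN).mpr (Or.inl h4))

end Duet
section DuetBack

variable {M : PreNetwork X V}

lemma duet_of_root [Nonempty X] (hN : IsNetwork M) (hS : StackFree M) (hB : Banyan M)
    (hT : ∀ a b c : X, ¬ TripletRel M a b c) {x y : X} (hxy : x ≠ y) {r : V}
    (hr : IsRoot M.Arc r) (h1 : M.Arc r (pos M x)) (h2 : M.Arc r (pos M y)) :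
    DuetRel M x y := by
  refine ⟨hxy, fun z => ⟨hT _ _ _, hT _ _ _, hT _ _ _⟩, ?_⟩
  have hlxy : M.leaf x ≠ M.leaf y := fun hh => hxy (hN.leafInj hh)
  have ex : udeg M (M.leaf x) = 1 := udeg_leaf hN (leaf_is_leafvtx hN x)
  have ey : udeg M (M.leaf y) = 1 := udeg_leaf hN (leaf_is_leafvtx hN y)
  have er : udeg M r = 2 := udeg_root hN hr
  have hrlx : r ≠ M.leaf x := fun hh => root_not_leaf (hh ▸ hr) (leaf_is_leafvtx hN x)
  have hrly : r ≠ M.leaf y := fun hh => root_not_leaf (hh ▸ hr) (leaf_is_leafvtx hN y)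
  have hpxy : pos M x ≠ pos M y := fun hh => hxy (pos_inj hN hB hh)
  have hrpx : r ≠ pos M x := fun hh => pos_not_root hN hB x (hh ▸ hr)
  have hrpy : r ≠ pos M y := fun hh => pos_not_root hN hB y (hh ▸ hr)
  rcases pos_leaf_or_hybrid hN hB x with ⟨hax, _⟩ | hax <;>
    rcases pos_leaf_or_hybrid hN hB y with ⟨hay, _⟩ | hay
  · -- both attachment points are the leaves themselves
    rw [hax] at h1 hrpx
    rw [hay] at h2 hrpy
    refine ⟨SimpleGraph.Walk.cons ((adj_iff hN).mpr (Or.inr h1))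
      (SimpleGraph.Walk.cons ((adj_iff hN).mpr (Or.inl h2)) SimpleGraph.Walk.nil), ?_, ?_⟩
    · rw [SimpleGraph.Walk.isPath_def]
      simp only [SimpleGraph.Walk.support_cons, SimpleGraph.Walk.support_nil]
      simp [List.nodup_cons, hlxy, hrlx.symm, hrly]
      all_goals tauto
    · simp only [SimpleGraph.Walk.support_cons, SimpleGraph.Walk.support_nil]
      simp [List.countP_cons, ex, ey, er]
  · -- x at leaf, y at hybrid
    have harcy : M.Arc (pos M y) (M.leaf y) := pos_hybrid_arc hN hB hay
    have hpylx : pos M y ≠ M.leaf x :=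
      fun hh => leaf_not_hybrid (leaf_is_leafvtx hN x) (hh ▸ hay)
    have hpyly : pos M y ≠ M.leaf y :=
      fun hh => leaf_not_hybrid (leaf_is_leafvtx hN y) (hh ▸ hay)
    have epy : udeg M (pos M y) ≠ 2 := by have := udeg_hybrid hN hay; omega
    rw [hax] at h1 hrpx
    refine ⟨SimpleGraph.Walk.cons ((adj_iff hN).mpr (Or.inr h1))
      (SimpleGraph.Walk.cons ((adj_iff hN).mpr (Or.inl h2))
      (SimpleGraph.Walk.cons ((adj_iff hN).mpr (Or.inl harcy)) SimpleGraph.Walk.nil)),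
      ?_, ?_⟩
    · rw [SimpleGraph.Walk.isPath_def]
      simp only [SimpleGraph.Walk.support_cons, SimpleGraph.Walk.support_nil]
      simp [List.nodup_cons, hlxy, hrlx.symm, hrly, hrpy, hpylx, hpyly]
      all_goals tauto
    · simp only [SimpleGraph.Walk.support_cons, SimpleGraph.Walk.support_nil]
      simp [List.countP_cons, ex, ey, er, epy]
  · -- x at hybrid, y at leaf
    have harcx : M.Arc (pos M x) (M.leaf x) := pos_hybrid_arc hN hB hax
    have hpxlx : pos M x ≠ M.leaf x :=
      fun hh => leaf_not_hybrid (leaf_is_leafvtx hN x) (hh ▸ hax)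
    have hpxly : pos M x ≠ M.leaf y :=
      fun hh => leaf_not_hybrid (leaf_is_leafvtx hN y) (hh ▸ hax)
    have epx : udeg M (pos M x) ≠ 2 := by have := udeg_hybrid hN hax; omega
    rw [hay] at h2 hrpy
    refine ⟨SimpleGraph.Walk.cons ((adj_iff hN).mpr (Or.inr harcx))
      (SimpleGraph.Walk.cons ((adj_iff hN).mpr (Or.inr h1))
      (SimpleGraph.Walk.cons ((adj_iff hN).mpr (Or.inl h2)) SimpleGraph.Walk.nil)),
      ?_, ?_⟩
    · rw [SimpleGraph.Walk.isPath_def]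
      simp only [SimpleGraph.Walk.support_cons, SimpleGraph.Walk.support_nil]
      simp [List.nodup_cons, hlxy, hrlx.symm, hrly, hrpx, hpxlx, hpxly]
      all_goals tauto
    · simp only [SimpleGraph.Walk.support_cons, SimpleGraph.Walk.support_nil]
      simp [List.countP_cons, ex, ey, er, epx]
  · -- both at hybrids
    have harcx : M.Arc (pos M x) (M.leaf x) := pos_hybrid_arc hN hB hax
    have harcy : M.Arc (pos M y) (M.leaf y) := pos_hybrid_arc hN hB hay
    have hpxlx : pos M x ≠ M.leaf x :=
      fun hh => leaf_not_hybrid (leaf_is_leafvtx hN x) (hh ▸ hax)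
    have hpxly : pos M x ≠ M.leaf y :=
      fun hh => leaf_not_hybrid (leaf_is_leafvtx hN y) (hh ▸ hax)
    have hpylx : pos M y ≠ M.leaf x :=
      fun hh => leaf_not_hybrid (leaf_is_leafvtx hN x) (hh ▸ hay)
    have hpyly : pos M y ≠ M.leaf y :=
      fun hh => leaf_not_hybrid (leaf_is_leafvtx hN y) (hh ▸ hay)
    have epx : udeg M (pos M x) ≠ 2 := by have := udeg_hybrid hN hax; omega
    have epy : udeg M (pos M y) ≠ 2 := by have := udeg_hybrid hN hay; omega
    refine ⟨SimpleGraph.Walk.cons ((adj_iff hN).mpr (Or.inr harcx))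
      (SimpleGraph.Walk.cons ((adj_iff hN).mpr (Or.inr h1))
      (SimpleGraph.Walk.cons ((adj_iff hN).mpr (Or.inl h2))
      (SimpleGraph.Walk.cons ((adj_iff hN).mpr (Or.inl harcy)) SimpleGraph.Walk.nil))),
      ?_, ?_⟩
    · rw [SimpleGraph.Walk.isPath_def]
      simp only [SimpleGraph.Walk.support_cons, SimpleGraph.Walk.support_nil]
      simp [List.nodup_cons, hlxy, hrlx.symm, hrly, hrpx, hrpy, hpxlx, hpxly, hpylx,
        hpyly, hpxy]
      all_goals tauto
    · simp only [SimpleGraph.Walk.support_cons, SimpleGraph.Walk.support_nil]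
      simp [List.countP_cons, ex, ey, er, epx, epy]

end DuetBack
/-! ### Partner counting and transfer of hybrid status -/

section Partners

variable {M : PreNetwork X V} {M' : PreNetwork X W}

lemma two_parents (hN : IsNetwork M) {v : V} (hd : 2 ≤ inDeg M.Arc v) :
    ∃ p1 p2, p1 ≠ p2 ∧ M.Arc p1 v ∧ M.Arc p2 v := by
  have : Finite V := hN.finiteV
  obtain ⟨a, ha, b, hb, hab⟩ := (Set.one_lt_ncard (Set.toFinite _)).mp hd
  exact ⟨a, b, hab, ha, hb⟩

lemma unique_partner_of_posleaf [Nonempty X] (hN : IsNetwork M) (hA : IsArboreal M)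
    (hS : StackFree M) (hB : Banyan M) {x : X} (hpos : pos M x = M.leaf x)
    {y z : X} (hy : DuetRel M x y) (hz : DuetRel M x z) : y = z := by
  obtain ⟨r1, hr1, h1x, h1y⟩ := root_of_duet hN hS hB hy
  obtain ⟨r2, hr2, h2x, h2z⟩ := root_of_duet hN hS hB hz
  have e1 : r1 = parent M x := by
    apply eq_parent hN
    rw [← hpos]
    exact h1x
  have e2 : r2 = parent M x := by
    apply eq_parent hN
    rw [← hpos]
    exact h2x
  subst e1
  rw [e2] at h2x h2z hr2
  have hyx : pos M y ≠ pos M x := fun hh => hy.1 (pos_inj hN hB hh).symm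
  have hzx : pos M z ≠ pos M x := fun hh => hz.1 (pos_inj hN hB hh).symm
  have := children_eq_of_two hN (root_outdeg_two hN hr1) h1x h1y hyx.symm h2z
  rcases this with hh | hh
  · exact absurd hh hzx
  · exact (pos_inj hN hB hh).symm

lemma two_partners_of_poshybrid [Nonempty X] (hN : IsNetwork M) (hA : IsArboreal M)
    (hS : StackFree M) (hB : Banyan M) (hT : ∀ a b c : X, ¬ TripletRel M a b c)
    {x : X} (hh : IsHybrid M.Arc (pos M x)) :
    ∃ y z, y ≠ z ∧ DuetRel M x y ∧ DuetRel M x z := by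
  obtain ⟨r1, r2, hr12, ha1, ha2⟩ := two_parents hN hh.2
  have hr1 : IsRoot M.Arc r1 := hB.1 _ _ hh ha1
  have hr2 : IsRoot M.Arc r2 := hB.1 _ _ hh ha2
  obtain ⟨c1, hc1, hc1ne⟩ :=
    exists_other_child hN (le_of_eq (root_outdeg_two hN hr1).symm) ha1
  obtain ⟨c2, hc2, hc2ne⟩ :=
    exists_other_child hN (le_of_eq (root_outdeg_two hN hr2).symm) ha2
  obtain ⟨y, hy⟩ := child_of_root_pos hN hS hB hr1 hc1
  obtain ⟨z, hz⟩ := child_of_root_pos hN hS hB hr2 hc2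
  have hxy : x ≠ y := by
    rintro rfl
    exact hc1ne (hy ▸ rfl)
  have hxz : x ≠ z := by
    rintro rfl
    exact hc2ne (hz ▸ rfl)
  have hdy : DuetRel M x y := duet_of_root hN hS hB hT hxy hr1 ha1 (hy ▸ hc1)
  have hdz : DuetRel M x z := duet_of_root hN hS hB hT hxz hr2 ha2 (hz ▸ hc2)
  refine ⟨y, z, ?_, hdy, hdz⟩
  rintro rfl
  -- then r1 and r2 are both adjacent to pos x and pos y
  apply hr12
  exact root_unique_for_pair hN hA hB hxy hr1 hr2 ha1 (hy ▸ hc1) ha2 (hz ▸ hc2)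

lemma hybrid_pos_transfer [Nonempty X]
    (hN : IsNetwork M) (hA : IsArboreal M) (hS : StackFree M) (hB : Banyan M)
    (hT : ∀ a b c : X, ¬ TripletRel M a b c)
    (hN' : IsNetwork M') (hA' : IsArboreal M') (hS' : StackFree M') (hB' : Banyan M')
    (hduet : ∀ a b : X, DuetRel M a b ↔ DuetRel M' a b)
    {x : X} (hh : IsHybrid M.Arc (pos M x)) : IsHybrid M'.Arc (pos M' x) := by
  obtain ⟨y, z, hyz, hdy, hdz⟩ := two_partners_of_poshybrid hN hA hS hB hT hh
  rcases pos_leaf_or_hybrid hN' hB' x with ⟨hp, _⟩ | hp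
  · exact absurd (unique_partner_of_posleaf hN' hA' hS' hB' hp
      ((hduet x y).mp hdy) ((hduet x z).mp hdz)) hyz
  · exact hp

lemma posleaf_transfer [Nonempty X]
    (hN : IsNetwork M) (hA : IsArboreal M) (hS : StackFree M) (hB : Banyan M)
    (hT : ∀ a b c : X, ¬ TripletRel M a b c)
    (hN' : IsNetwork M') (hA' : IsArboreal M') (hS' : StackFree M') (hB' : Banyan M')
    (hT' : ∀ a b c : X, ¬ TripletRel M' a b c)
    (hduet : ∀ a b : X, DuetRel M a b ↔ DuetRel M' a b)
    {x : X} (hpos : pos M x = M.leaf x) : pos M' x = M'.leaf x := by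
  rcases pos_leaf_or_hybrid hN' hB' x with ⟨hp, _⟩ | hp
  · exact hp
  · have := hybrid_pos_transfer hN' hA' hS' hB' hT' hN hA hS hB
      (fun a b => (hduet a b).symm) hp
    rw [hpos] at this
    exact absurd this (fun h2 => leaf_not_hybrid (leaf_is_leafvtx hN x) h2)

end Partners
/-! ### The vertex correspondence -/

section Corr

/-- bundle of hypotheses on a network -/
structure Ctx (M : PreNetwork X V) : Prop where
  hN : IsNetwork M
  hA : IsArboreal M
  hS : StackFree M
  hB : Banyan M
  hT : ∀ a b c : X, ¬ TripletRel M a b c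

/-- the correspondence between vertices of two banyan networks with the same duets -/
def Corr (M : PreNetwork X V) (M' : PreNetwork X W) (v : V) (w : W) : Prop :=
  (∀ x, v = M.leaf x ↔ w = M'.leaf x) ∧
  (IsRoot M.Arc v ↔ IsRoot M'.Arc w) ∧
  (IsHybrid M.Arc v ↔ IsHybrid M'.Arc w) ∧
  (∀ x, v = pos M x ↔ w = pos M' x) ∧
  (∀ x, M.Arc v (pos M x) ↔ M'.Arc w (pos M' x))

variable {M : PreNetwork X V} {M' : PreNetwork X W}

lemma Corr.symm {v : V} {w : W} (h : Corr M M' v w) : Corr M' M w v :=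
  ⟨fun x => (h.1 x).symm, (h.2.1).symm, (h.2.2.1).symm, fun x => (h.2.2.2.1 x).symm,
    fun x => (h.2.2.2.2 x).symm⟩

lemma ne_leaf_of_root (hN : IsNetwork M) {v : V} (hr : IsRoot M.Arc v) (x : X) :
    v ≠ M.leaf x := fun he => root_not_leaf (he ▸ hr) (leaf_is_leafvtx hN x)

lemma ne_leaf_of_hybrid (hN : IsNetwork M) {v : V} (hh : IsHybrid M.Arc v) (x : X) :
    v ≠ M.leaf x := fun he => leaf_not_hybrid (leaf_is_leafvtx hN x) (he ▸ hh)

lemma corr_exists [Nonempty X] (C : Ctx M) (C' : Ctx M')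
    (hduet : ∀ a b : X, DuetRel M a b ↔ DuetRel M' a b) (v : V) :
    ∃ w, Corr M M' v w := by
  rcases C.hN.classify' v with hv | hv | hv | hv
  · -- v is a root
    obtain ⟨c1, c2, h12, hc1, hc2⟩ :=
      two_children C.hN (le_of_eq (root_outdeg_two C.hN hv).symm)
    obtain ⟨x, hx⟩ := child_of_root_pos C.hN C.hS C.hB hv hc1
    obtain ⟨y, hy⟩ := child_of_root_pos C.hN C.hS C.hB hv hc2
    subst hx; subst hy
    have hxy : x ≠ y := fun hh => h12 (hh ▸ rfl)
    have hd : DuetRel M x y := duet_of_root C.hN C.hS C.hB C.hT hxy hv hc1 hc2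
    obtain ⟨r', hr', h1', h2'⟩ := root_of_duet C'.hN C'.hS C'.hB ((hduet x y).mp hd)
    refine ⟨r', ?_, ?_, ?_, ?_, ?_⟩
    · intro a
      exact ⟨fun he => absurd he (ne_leaf_of_root C.hN hv a),
        fun he => absurd he (ne_leaf_of_root C'.hN hr' a)⟩
    · exact ⟨fun _ => hr', fun _ => hv⟩
    · exact ⟨fun hh => absurd hh (fun h2 => root_not_hybrid hv h2),
        fun hh => absurd hh (fun h2 => root_not_hybrid hr' h2)⟩
    · intro a
      exact ⟨fun he => absurd (he ▸ hv) (pos_not_root C.hN C.hB a),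
        fun he => absurd (he ▸ hr') (pos_not_root C'.hN C'.hB a)⟩
    · intro a
      constructor
      · intro ha
        rcases children_eq_of_two C.hN (root_outdeg_two C.hN hv) hc1 hc2 h12 ha
          with hh | hh
        · rw [pos_inj C.hN C.hB hh]; exact h1'
        · rw [pos_inj C.hN C.hB hh]; exact h2'
      · intro ha
        have h12' : pos M' x ≠ pos M' y := fun hh => hxy (pos_inj C'.hN C'.hB hh)
        rcases children_eq_of_two C'.hN (root_outdeg_two C'.hN hr') h1' h2' h12' ha
          with hh | hh
        · rw [pos_inj C'.hN C'.hB hh]; exact hc1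
        · rw [pos_inj C'.hN C'.hB hh]; exact hc2
  · -- v is a leaf
    obtain ⟨x, hx⟩ := (C.hN.leafIff v).mp hv
    subst hx
    refine ⟨M'.leaf x, ?_, ?_, ?_, ?_, ?_⟩
    · intro a
      constructor
      · intro he; rw [C.hN.leafInj he]
      · intro he; rw [C'.hN.leafInj he]
    · exact ⟨fun hh => absurd (leaf_is_leafvtx C.hN x) (fun h2 => root_not_leaf hh h2),
        fun hh => absurd (leaf_is_leafvtx C'.hN x) (fun h2 => root_not_leaf hh h2)⟩
    · exact ⟨fun hh => absurd hh (fun h2 => leaf_not_hybrid (leaf_is_leafvtx C.hN x) h2),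
        fun hh => absurd hh (fun h2 => leaf_not_hybrid (leaf_is_leafvtx C'.hN x) h2)⟩
    · intro a
      constructor
      · intro he
        have hl : IsLeafVtx M.Arc (pos M a) := by rw [← he]; exact leaf_is_leafvtx C.hN x
        rcases pos_leaf_or_hybrid C.hN C.hB a with ⟨hp, _⟩ | hp
        · have hxa : x = a := C.hN.leafInj (he.trans hp)
          subst hxa
          rw [posleaf_transfer C.hN C.hA C.hS C.hB C.hT C'.hN C'.hA C'.hS C'.hB C'.hT
            hduet hp]
        · exact absurd hp (fun h2 => leaf_not_hybrid hl h2)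
      · intro he
        have hl : IsLeafVtx M'.Arc (pos M' a) := by
          rw [← he]; exact leaf_is_leafvtx C'.hN x
        rcases pos_leaf_or_hybrid C'.hN C'.hB a with ⟨hp, _⟩ | hp
        · have hxa : x = a := C'.hN.leafInj (he.trans hp)
          subst hxa
          rw [posleaf_transfer C'.hN C'.hA C'.hS C'.hB C'.hT C.hN C.hA C.hS C.hB C.hT
            (fun a b => (hduet a b).symm) hp]
        · exact absurd hp (fun h2 => leaf_not_hybrid hl h2)
    · intro a
      exact ⟨fun ha => absurd ha ((leaf_is_leafvtx C.hN x).no_out C.hN),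
        fun ha => absurd ha ((leaf_is_leafvtx C'.hN x).no_out C'.hN)⟩
  · -- v is a hybrid
    have hx : pos M (lab M v) = v := pos_of_hybrid C.hN C.hS C.hB hv
    set x := lab M v with hxdef
    have hhx : IsHybrid M.Arc (pos M x) := by rw [hx]; exact hv
    have hh' : IsHybrid M'.Arc (pos M' x) :=
      hybrid_pos_transfer C.hN C.hA C.hS C.hB C.hT C'.hN C'.hA C'.hS C'.hB hduet hhx
    refine ⟨pos M' x, ?_, ?_, ?_, ?_, ?_⟩
    · intro a
      exact ⟨fun he => absurd he (ne_leaf_of_hybrid C.hN hv a),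
        fun he => absurd he (ne_leaf_of_hybrid C'.hN hh' a)⟩
    · exact ⟨fun hh => absurd hh (fun h2 => root_not_hybrid h2 hv),
        fun hh => absurd hh (fun h2 => root_not_hybrid h2 hh')⟩
    · exact ⟨fun _ => hh', fun _ => hv⟩
    · intro a
      constructor
      · intro he
        have : x = a := pos_inj C.hN C.hB (hx.trans he)
        rw [← this]
      · intro he
        have : x = a := pos_inj C'.hN C'.hB he
        rw [← this, hx]
    · intro a
      constructor
      · intro ha
        exfalso
        have hchild : M.Arc v (M.leaf x) := by
          rw [← hx]; exact pos_hybrid_arc C.hN C.hB hhx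
        have heq : pos M a = M.leaf x := child_unique C.hN hv.1 ha hchild
        have hl : IsLeafVtx M.Arc (pos M a) := by
          rw [heq]; exact leaf_is_leafvtx C.hN x
        rcases pos_leaf_or_hybrid C.hN C.hB a with ⟨hp, _⟩ | hp
        · have hxa : a = x := C.hN.leafInj (hp.symm.trans heq)
          subst hxa
          rw [hp] at hhx
          exact leaf_not_hybrid (leaf_is_leafvtx C.hN x) hhx
        · exact leaf_not_hybrid hl hp
      · intro ha
        exfalso
        have hchild : M'.Arc (pos M' x) (M'.leaf x) := pos_hybrid_arc C'.hN C'.hB hh'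
        have heq : pos M' a = M'.leaf x := child_unique C'.hN hh'.1 ha hchild
        have hl : IsLeafVtx M'.Arc (pos M' a) := by
          rw [heq]; exact leaf_is_leafvtx C'.hN x
        rcases pos_leaf_or_hybrid C'.hN C'.hB a with ⟨hp, _⟩ | hp
        · have hxa : a = x := C'.hN.leafInj (hp.symm.trans heq)
          subst hxa
          rw [hp] at hh'
          exact leaf_not_hybrid (leaf_is_leafvtx C'.hN x) hh'
        · exact leaf_not_hybrid hl hp
  · exact absurd hv (C.hB.noTree C.hN v)

lemma corr_unique [Nonempty X] (C : Ctx M) (C' : Ctx M')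
    (hduet : ∀ a b : X, DuetRel M a b ↔ DuetRel M' a b) {v : V} {w w' : W}
    (h : Corr M M' v w) (h' : Corr M M' v w') : w = w' := by
  rcases C.hN.classify' v with hv | hv | hv | hv
  · -- v is a root
    obtain ⟨c1, c2, h12, hc1, hc2⟩ :=
      two_children C.hN (le_of_eq (root_outdeg_two C.hN hv).symm)
    obtain ⟨x, hx⟩ := child_of_root_pos C.hN C.hS C.hB hv hc1
    obtain ⟨y, hy⟩ := child_of_root_pos C.hN C.hS C.hB hv hc2
    subst hx; subst hy
    have hxy : x ≠ y := fun hh => h12 (hh ▸ rfl)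
    exact root_unique_for_pair C'.hN C'.hA C'.hB hxy (h.2.1.mp hv) (h'.2.1.mp hv)
      ((h.2.2.2.2 x).mp hc1) ((h.2.2.2.2 y).mp hc2)
      ((h'.2.2.2.2 x).mp hc1) ((h'.2.2.2.2 y).mp hc2)
  · -- v is a leaf
    obtain ⟨x, hx⟩ := (C.hN.leafIff v).mp hv
    rw [(h.1 x).mp hx.symm, (h'.1 x).mp hx.symm]
  · -- v is a hybrid
    have hx : v = pos M (lab M v) := (pos_of_hybrid C.hN C.hS C.hB hv).symm
    rw [(h.2.2.2.1 _).mp hx, (h'.2.2.2.1 _).mp hx]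
  · exact absurd hv (C.hB.noTree C.hN v)

lemma corr_arc [Nonempty X] (C : Ctx M) (C' : Ctx M')
    {u v : V} {w w2 : W} (hu : Corr M M' u w) (hv : Corr M M' v w2)
    (ha : M.Arc u v) : M'.Arc w w2 := by
  rcases C.hN.classify' u with hc | hc | hc | hc
  · -- u is a root
    obtain ⟨a, hav⟩ := child_of_root_pos C.hN C.hS C.hB hc ha
    subst hav
    rw [(hv.2.2.2.1 a).mp rfl]
    exact (hu.2.2.2.2 a).mp ha
  · exact absurd ha (hc.no_out C.hN)
  · -- u is a hybrid
    have hlab : M.Arc u (M.leaf (lab M u)) := lab_arc C.hN C.hS C.hB hc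
    have hveq : v = M.leaf (lab M u) := child_unique C.hN hc.1 ha hlab
    have hupos : u = pos M (lab M u) := (pos_of_hybrid C.hN C.hS C.hB hc).symm
    have hw : w = pos M' (lab M u) := (hu.2.2.2.1 _).mp hupos
    have hw2 : w2 = M'.leaf (lab M u) := (hv.1 _).mp hveq
    have hh' : IsHybrid M'.Arc (pos M' (lab M u)) := by
      rw [← hw]; exact hu.2.2.1.mp hc
    rw [hw, hw2]
    exact pos_hybrid_arc C'.hN C'.hB hh'
  · exact absurd hc (C.hB.noTree C.hN u)

end Corr
/-! ### The main theorem -/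

section Main

lemma mem_duetSys_iff [Nonempty X] {M : PreNetwork X V} (hN : IsNetwork M)
    (hS : StackFree M) (hB : Banyan M)
    (hT : ∀ a b c : X, ¬ TripletRel M a b c) (x y : X) :
    s(x, y) ∈ duetSys M ↔ DuetRel M x y := by
  constructor
  · rintro ⟨a, b, hab, he⟩
    rw [Sym2.eq_iff] at he
    rcases he with ⟨rfl, rfl⟩ | ⟨rfl, rfl⟩
    · exact hab
    · obtain ⟨r, hr, h1, h2⟩ := root_of_duet hN hS hB hab
      exact duet_of_root hN hS hB hT hab.1.symm hr h2 h1
  · intro h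
    exact ⟨x, y, h, rfl⟩

/-- A banyan network `N ∈ 𝒜(X)` (with `|X| ≥ 3`) is encoded
by `𝒟(N)` within `𝒜(X)`: every `N' ∈ 𝒜(X)` with
`ℛ(N') ∪ 𝒟(N') = 𝒟(N)` is isomorphic to `N`. -/
theorem banyan_encoded_by_duets
    {X V : Type} [Finite X] (hX : 3 ≤ Nat.card X)
    (N : PreNetwork X V) (hN : InA N) (hB : Banyan N) :
    ∀ (W : Type) (N' : PreNetwork X W), InA N' →
      dtSys N' = Sum.inl '' duetSys N → Isomorphic N' N := by
  intro W N' hInA' hsys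
  haveI : Nonempty X := by
    have h1 : 0 < Nat.card X := by omega
    exact (Nat.card_pos_iff.mp h1).1
  obtain ⟨hN1, hA1, hS1⟩ := hN
  obtain ⟨hN2, hA2, hS2⟩ := hInA'
  -- N' induces no triplets
  have hT' : ∀ a b c : X, ¬ TripletRel N' a b c := by
    intro a b c ht
    have hmem : (Sum.inr (s(a, b), c) : Sym2 X ⊕ (Sym2 X × X)) ∈ dtSys N' :=
      Or.inr ⟨(s(a, b), c), ⟨a, b, c, ht, rfl⟩, rfl⟩
    rw [hsys] at hmem
    obtain ⟨d, _, he⟩ := hmem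
    exact nomatch he
  -- hence N' is banyan
  have hB' : Banyan N' := by
    refine banyan_of_noTree hN2 hS2 (fun v hv => ?_)
    obtain ⟨a, b, c, ht⟩ := triplet_of_tree hN2 hA2 hv
    exact hT' a b c ht
  have hT : ∀ a b c : X, ¬ TripletRel N a b c := tripletFree_of_banyan hN1 hS1 hB
  -- duets coincide
  have hduet : ∀ a b : X, DuetRel N' a b ↔ DuetRel N a b := by
    intro a b
    rw [← mem_duetSys_iff hN2 hS2 hB' hT', ← mem_duetSys_iff hN1 hS1 hB hT]
    constructor
    · intro h
      have hmem : (Sum.inl (s(a, b)) : Sym2 X ⊕ (Sym2 X × X)) ∈ dtSys N' :=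
        Or.inl ⟨_, h, rfl⟩
      rw [hsys] at hmem
      obtain ⟨d, hd, he⟩ := hmem
      rwa [Sum.inl_injective he] at hd
    · intro h
      have hmem : (Sum.inl (s(a, b)) : Sym2 X ⊕ (Sym2 X × X)) ∈
          Sum.inl '' duetSys N := ⟨_, h, rfl⟩
      rw [← hsys] at hmem
      rcases hmem with ⟨d, hd, he⟩ | ⟨d, hd, he⟩
      · rwa [Sum.inl_injective he] at hd
      · exact nomatch he
  have C : Ctx N := ⟨hN1, hA1, hS1, hB, hT⟩
  have C' : Ctx N' := ⟨hN2, hA2, hS2, hB', hT'⟩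
  classical
  choose g hg using corr_exists C' C hduet
  choose f hf using corr_exists C C' (fun a b => (hduet a b).symm)
  refine ⟨⟨g, f, ?_, ?_⟩, ?_, ?_⟩
  · intro w
    exact corr_unique C C' (fun a b => (hduet a b).symm) (hf (g w)) ((hg w).symm)
  · intro v
    exact corr_unique C' C hduet (hg (f v)) ((hf v).symm)
  · intro u v
    constructor
    · intro h
      exact corr_arc C' C (hg u) (hg v) h
    · intro h
      exact corr_arc C C' ((hg u).symm) ((hg v).symm) h
  · intro x
    exact ((hg (N'.leaf x)).1 x).mp rfl


end Main

end ArbNet
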